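/- The mutual exclusion parameterized system ME satisfies mutual exclusion of red states: for every n and every configuration c ∈ Q* with green^n →*_ME c, the word c contains at most one occurrence of the letter red (i.e. c is not of the form u·red·v·red·w for any u,v,w ∈ Q*). -/
import Mathlib


/-- Guards of conditional transition rules: `∀_I J` or `∃_I J` with `I ∈ {L, R, LR}`. -/
inductive Guard (Q : Type) : Type
  | forallL (J : Set Q)
  | forallR (J : Set Q)
  | forallLR (J : Set Q)
  | existsL (J : Set Q)
  | existsR (J : Set Q)
  | existsLR (J : Set Q)

/-- A transition rule of a parameterized system: an optional guard, a source
local state and a target local state. -/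
structure Rule (Q : Type) : Type where
  guard : Option (Guard Q)
  src : Q
  tgt : Q

/-- Satisfaction of a guard at a position whose strict left context is `u` and
strict right context is `v`. -/
def GuardSat {Q : Type} (g : Guard Q) (u v : List Q) : Prop :=
  match g with
  | .forallL J => ∀ q ∈ u, q ∈ J
  | .forallR J => ∀ q ∈ v, q ∈ J
  | .forallLR J => (∀ q ∈ u, q ∈ J) ∧ (∀ q ∈ v, q ∈ J)
  | .existsL J => ∃ q ∈ u, q ∈ J
  | .existsR J => ∃ q ∈ v, q ∈ J
  | .existsLR J => (∃ q ∈ u, q ∈ J) ∨ (∃ q ∈ v, q ∈ J)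

/-- One-step transition relation `→_P` of the parameterized system with rules `T`. -/
def Step {Q : Type} (T : Set (Rule Q)) (c c' : List Q) : Prop :=
  ∃ r ∈ T, ∃ u v : List Q,
    c = u ++ r.src :: v ∧ c' = u ++ r.tgt :: v ∧
      ∀ g, r.guard = some g → GuardSat g u v

/-- Reachability `→*_P`: the reflexive-transitive closure of `→_P`. -/
def Reach {Q : Type} (T : Set (Rule Q)) : List Q → List Q → Prop :=
  Relation.ReflTransGen (Step T)

/-- Interpretation `[t_c]` of the closed term `t_c = c₁ * ⋯ * cₙ` (with `t_ε = e`)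
in a structure with domain `M`, binary operation `mul`, constants `e` and `cq q`. -/
def wordVal {Q M : Type} (mul : M → M → M) (e : M) (cq : Q → M) : List Q → M
  | [] => e
  | [q] => cq q
  | q :: q' :: rest => mul (cq q) (wordVal mul e cq (q' :: rest))

/-- The set `J` of a universal guard (if any). -/
def univGuardSet {Q : Type} (g : Guard Q) : Option (Set Q) :=
  match g with
  | .forallL J => some J
  | .forallR J => some J
  | .forallLR J => some J
  | _ => none

/-- The (universal closure of the) axiom of `Φ_P` corresponding to a single
transition rule, interpreted in a first-order structure with domain `M`. -/
def RuleAx {Q M : Type} (mul : M → M → M) (cq : Q → M)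
    (R : M → Prop) (PJ : Set Q → M → Prop) (r : Rule Q) : Prop :=
  match r.guard with
  | none =>
      ∀ x y, R (mul (mul x (cq r.src)) y) → R (mul (mul x (cq r.tgt)) y)
  | some (.forallL J) =>
      ∀ x y, R (mul (mul x (cq r.src)) y) ∧ PJ J x → R (mul (mul x (cq r.tgt)) y)
  | some (.forallR J) =>
      ∀ x y, R (mul (mul x (cq r.src)) y) ∧ PJ J y → R (mul (mul x (cq r.tgt)) y)
  | some (.forallLR J) =>
      ∀ x y, R (mul (mul x (cq r.src)) y) ∧ PJ J x ∧ PJ J y →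
        R (mul (mul x (cq r.tgt)) y)
  | some (.existsL J) =>
      ∀ q ∈ J, ∀ x y z w,
        R (mul (mul x (cq r.src)) y) ∧ x = mul (mul z (cq q)) w →
          R (mul (mul x (cq r.tgt)) y)
  | some (.existsR J) =>
      ∀ q ∈ J, ∀ x y z w,
        R (mul (mul x (cq r.src)) y) ∧ y = mul (mul z (cq q)) w →
          R (mul (mul x (cq r.tgt)) y)
  | some (.existsLR J) =>
      ∀ q ∈ J, ∀ x y z w,
        R (mul (mul x (cq r.src)) y) ∧
            (x = mul (mul z (cq q)) w ∨ y = mul (mul z (cq q)) w) →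
          R (mul (mul x (cq r.tgt)) y)

/-- A first-order structure (domain `M`, operation `mul`, constants `e`, `cq q`,
predicates `In`, `R`, `P^J`) satisfies all formulas of the encoding `Φ_P` of the
parameterized system with rules `T` and initial local state `q0`. -/
def SatPhi {Q M : Type} (T : Set (Rule Q)) (q0 : Q)
    (mul : M → M → M) (e : M) (cq : Q → M)
    (In R : M → Prop) (PJ : Set Q → M → Prop) : Prop :=
  (∀ x y z : M, mul (mul x y) z = mul x (mul y z)) ∧
  (∀ x : M, mul e x = x) ∧
  (∀ x : M, mul x e = x) ∧
  In e ∧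
  (∀ x, In x → In (mul x (cq q0))) ∧
  (∀ x, In x → R x) ∧
  (∀ J : Set Q, (∃ r ∈ T, ∃ g, r.guard = some g ∧ univGuardSet g = some J) →
      PJ J e ∧ ∀ q ∈ J, ∀ x, PJ J x → PJ J (mul x (cq q))) ∧
  (∀ r ∈ T, RuleAx mul cq R PJ r)

/-- The local states of the mutual exclusion system `ME`. -/
inductive MEState : Type
  | green | black | blue | red
deriving DecidableEq

/-- The transition rules of the mutual exclusion system `ME`. -/
def MET : Set (Rule MEState) :=
  { ⟨some (.forallLR {MEState.green, MEState.black}), MEState.green, MEState.black⟩,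
    ⟨none, MEState.black, MEState.blue⟩,
    ⟨some (.existsL {MEState.black, MEState.blue, MEState.red}), MEState.blue, MEState.blue⟩,
    ⟨some (.forallL {MEState.green}), MEState.blue, MEState.red⟩,
    ⟨none, MEState.red, MEState.black⟩,
    ⟨none, MEState.black, MEState.green⟩ }

/-- Invariant: the strict left context of every `red` consists of `green`s. -/
def MEInv : List MEState → Prop
  | [] => True
  | q :: t => (q = .green ∧ MEInv t) ∨ .red ∉ t

lemma MEInv_of_not_red {c : List MEState} (h : MEState.red ∉ c) : MEInv c := by
  induction c with
  | nil => trivial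
  | cons q t ih =>
    right
    intro ht; exact h (List.mem_cons_of_mem _ ht)

lemma MEInv_not_red_right {u v : List MEState} {a : MEState}
    (h : MEInv (u ++ a :: v)) (ha : a ≠ .green) : MEState.red ∉ v := by
  induction u with
  | nil =>
    rcases h with ⟨h1, _⟩ | h2
    · exact absurd h1 ha
    · intro hv; exact h2 hv
  | cons q t ih =>
    rcases h with ⟨_, h1⟩ | h2
    · exact ih h1
    · intro hv
      exact h2 (by simp [hv])

lemma MEInv_replace {u v : List MEState} {a b : MEState}
    (h : MEInv (u ++ a :: v)) (ha : a ≠ .green) (hb : b ≠ .red) :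
    MEInv (u ++ b :: v) := by
  have hrv : MEState.red ∉ v := MEInv_not_red_right h ha
  induction u with
  | nil =>
    right
    intro hv; exact hrv hv
  | cons q t ih =>
    rcases h with ⟨h1, h2⟩ | h2
    · exact Or.inl ⟨h1, ih h2⟩
    · right
      intro hv
      rcases List.mem_append.mp hv with h3 | h3
      · exact h2 (by simp [h3])
      · rcases List.mem_cons.mp h3 with h4 | h4
        · exact hb h4.symm
        · exact hrv h4

lemma MEInv_green_append {u t : List MEState}
    (hu : ∀ q ∈ u, q = MEState.green) (ht : MEInv t) : MEInv (u ++ t) := by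
  induction u with
  | nil => exact ht
  | cons q s ih =>
    exact Or.inl ⟨hu q (by simp), ih fun q hq => hu q (by simp [hq])⟩

lemma MEInv_step {c c' : List MEState} (h : Step MET c c') (hc : MEInv c) :
    MEInv c' := by
  obtain ⟨r, hr, u, v, hcu, hcu', hg⟩ := h
  have hr' : r = ⟨some (.forallLR {MEState.green, MEState.black}), .green, .black⟩ ∨
      r = ⟨none, .black, .blue⟩ ∨
      r = ⟨some (.existsL {MEState.black, MEState.blue, MEState.red}), .blue, .blue⟩ ∨
      r = ⟨some (.forallL {MEState.green}), .blue, .red⟩ ∨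
      r = ⟨none, .red, .black⟩ ∨
      r = ⟨none, .black, .green⟩ := by
    simpa [MET] using hr
  subst hcu hcu'
  rcases hr' with h | h | h | h | h | h <;> subst h
  · -- green → black, all others green/black: no red anywhere
    have hsat := hg _ rfl
    obtain ⟨hL, hR⟩ := hsat
    apply MEInv_of_not_red
    intro hm
    rcases List.mem_append.mp hm with h1 | h1
    · have := hL _ h1; simp at this
    · rcases List.mem_cons.mp h1 with h2 | h2
      · exact MEState.noConfusion h2
      · have := hR _ h2; simp at this
  · exact MEInv_replace hc (by simp) (by simp)
  · exact hc
  · -- blue → red, all left green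
    have hsat := hg _ rfl
    have hrv : MEState.red ∉ v := MEInv_not_red_right hc (by simp)
    apply MEInv_green_append
    · intro q hq; simpa using hsat q hq
    · exact Or.inr hrv
  · exact MEInv_replace hc (by simp) (by simp)
  · exact MEInv_replace hc (by simp) (by simp)

/-- mutual exclusion for `ME`: every configuration reachable
in `ME` from an initial configuration `green^n` contains at most one occurrence
of the letter `red`, i.e. it is not of the form `u ++ red :: v ++ red :: w`. -/
theorem me_mutual_exclusion (n : ℕ) (c : List MEState)
    (hreach : Reach MET (List.replicate n MEState.green) c) :
    ¬ ∃ u v w : List MEState,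
        c = u ++ MEState.red :: (v ++ MEState.red :: w) := by
  have hinv : MEInv c := by
    induction hreach with
    | refl =>
      apply MEInv_of_not_red
      intro hm
      have := List.eq_of_mem_replicate hm
      exact MEState.noConfusion this
    | tail _ hstep ih => exact MEInv_step hstep ih
  rintro ⟨u, v, w, rfl⟩
  have h : MEState.red ∉ v ++ MEState.red :: w :=
    MEInv_not_red_right (a := MEState.red) hinv (by simp)
  exact h (by simp)
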